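/- Fix λ > 0, n ≥ k ≥ 1, an m×n matrix Y and an m×p matrix X with spectral norm ‖X‖₂ ≤ 1. For V ∈ 𝕆^{n×k} define T_V(S) = Θ⃗(X′YV + (I − X′X)S; λ) for S ∈ ℝ^{p×k}, where Θ⃗ applies row-wise the vector soft-thresholding a ↦ a(1 − λ/‖a‖₂)₊. Then for every V ∈ 𝕆^{n×k} and S ∈ ℝ^{p×k}, setting S̃ = T_V(S), one has F(S, V) − F(S̃, V) ≥ ½‖S̃ − S‖²_F. -/
import Mathlib


open Matrix Finset Filter Topology

noncomputable section

/-- Squared Frobenius norm of a matrix. -/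
def frobSq {m n : ℕ} (M : Matrix (Fin m) (Fin n) ℝ) : ℝ := ∑ i, ∑ j, (M i j) ^ 2

/-- Frobenius norm. -/
def frobNorm {m n : ℕ} (M : Matrix (Fin m) (Fin n) ℝ) : ℝ := Real.sqrt (frobSq M)

/-- Euclidean norm of a vector. -/
def eNorm {n : ℕ} (v : Fin n → ℝ) : ℝ := Real.sqrt (∑ j, (v j) ^ 2)

/-- Sum of the Euclidean norms of the rows, `‖S‖_{2,1}`. -/
def norm21 {p n : ℕ} (B : Matrix (Fin p) (Fin n) ℝ) : ℝ := ∑ i, eNorm (B i)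

/-- `V` has orthonormal columns: `V ∈ 𝕆^{n×k}`. -/
def IsOrthCol {n k : ℕ} (V : Matrix (Fin n) (Fin k) ℝ) : Prop := Vᵀ * V = 1

/-- The objective `F(S, V) = ½‖Y − XSV′‖²_F + λ‖S‖_{2,1}`. -/
def Fobj {m n p k : ℕ} (Y : Matrix (Fin m) (Fin n) ℝ) (X : Matrix (Fin m) (Fin p) ℝ)
    (lam : ℝ) (S : Matrix (Fin p) (Fin k) ℝ) (V : Matrix (Fin n) (Fin k) ℝ) : ℝ :=
  (1 / 2) * frobSq (Y - X * S * Vᵀ) + lam * norm21 S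


/-- Row-wise vector soft-thresholding: `Θ⃗(a; λ) = a(1 − λ/‖a‖₂)` if `‖a‖₂ > λ`, else `0`. -/
def vecTheta {k : ℕ} (lam : ℝ) (a : Fin k → ℝ) : Fin k → ℝ :=
  if lam < eNorm a then (1 - lam / eNorm a) • a else 0

/-- The thresholding map `T_V(S) = Θ⃗(X′YV + (I − X′X)S; λ)`, applied row-wise. -/
def Tmap {m n p k : ℕ} (Y : Matrix (Fin m) (Fin n) ℝ) (X : Matrix (Fin m) (Fin p) ℝ)
    (lam : ℝ) (V : Matrix (Fin n) (Fin k) ℝ) (S : Matrix (Fin p) (Fin k) ℝ) :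
    Matrix (Fin p) (Fin k) ℝ :=
  Matrix.of fun i => vecTheta lam ((Xᵀ * Y * V + (1 - Xᵀ * X) * S :
    Matrix (Fin p) (Fin k) ℝ) i)

namespace StmtAux

/-- Squared Euclidean norm of a vector. -/
def eSq {k : ℕ} (v : Fin k → ℝ) : ℝ := ∑ j, (v j) ^ 2

/-- Frobenius inner product via trace. -/
def ip {p k : ℕ} (M N : Matrix (Fin p) (Fin k) ℝ) : ℝ := Matrix.trace (Mᵀ * N)

variable {m n p k : ℕ}

lemma eSq_nonneg (v : Fin k → ℝ) : 0 ≤ eSq v :=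
  Finset.sum_nonneg fun _ _ => sq_nonneg _

lemma eNorm_nonneg (v : Fin k → ℝ) : 0 ≤ eNorm v := Real.sqrt_nonneg _

lemma eNorm_sq (v : Fin k → ℝ) : eNorm v ^ 2 = eSq v :=
  Real.sq_sqrt (eSq_nonneg v)

lemma dot_le (u a : Fin k → ℝ) : ∑ j, u j * a j ≤ eNorm u * eNorm a := by
  have h := Finset.sum_mul_sq_le_sq_mul_sq Finset.univ u a
  have h2 : (∑ j, u j * a j) ≤ Real.sqrt ((∑ j, (u j)^2) * ∑ j, (a j)^2) := by
    calc (∑ j, u j * a j) ≤ |∑ j, u j * a j| := le_abs_self _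
    _ = Real.sqrt ((∑ j, u j * a j)^2) := (Real.sqrt_sq_eq_abs _).symm
    _ ≤ Real.sqrt ((∑ j, (u j)^2) * ∑ j, (a j)^2) := Real.sqrt_le_sqrt h
  rwa [Real.sqrt_mul (Finset.sum_nonneg fun _ _ => sq_nonneg _)] at h2

lemma eSq_sub (u v : Fin k → ℝ) :
    eSq (u - v) = eSq u - 2 * (∑ j, u j * v j) + eSq v := by
  simp only [eSq, Pi.sub_apply, Finset.mul_sum, ← Finset.sum_sub_distrib,
    ← Finset.sum_add_distrib]
  exact Finset.sum_congr rfl fun j _ => by ring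

lemma eSq_smul (c : ℝ) (v : Fin k → ℝ) : eSq (c • v) = c ^ 2 * eSq v := by
  simp [eSq, smul_eq_mul, mul_pow, Finset.mul_sum]

lemma eNorm_smul_of_nonneg {c : ℝ} (hc : 0 ≤ c) (v : Fin k → ℝ) :
    eNorm (c • v) = c * eNorm v := by
  rw [eNorm, eNorm]
  have : ∑ j, ((c • v) j) ^ 2 = c ^ 2 * ∑ j, (v j) ^ 2 := by
    simp [smul_eq_mul, mul_pow, Finset.mul_sum]
  rw [this, Real.sqrt_mul (sq_nonneg c), Real.sqrt_sq hc]

lemma eNorm_zero : eNorm (0 : Fin k → ℝ) = 0 := by simp [eNorm]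

lemma dot_smul_right (c : ℝ) (u v : Fin k → ℝ) :
    ∑ j, u j * (c • v) j = c * ∑ j, u j * v j := by
  rw [Finset.mul_sum]
  exact Finset.sum_congr rfl fun j _ => by simp [smul_eq_mul]; ring

/-- The key per-row proximal inequality. -/
lemma prox_row (lam : ℝ) (hlam : 0 < lam) (a u : Fin k → ℝ) :
    (1/2) * eSq (u - vecTheta lam a)
      + ((1/2) * eSq (vecTheta lam a - a) + lam * eNorm (vecTheta lam a))
    ≤ (1/2) * eSq (u - a) + lam * eNorm u := by
  have hnu : 0 ≤ eNorm u := eNorm_nonneg u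
  have hd : ∑ j, u j * a j ≤ eNorm u * eNorm a := dot_le u a
  have hna2 : eSq a = eNorm a ^ 2 := (eNorm_sq a).symm
  by_cases h : lam < eNorm a
  · rw [vecTheta, if_pos h]
    set na := eNorm a with hna
    have hna0 : 0 < na := hlam.trans h
    have hne : na ≠ 0 := ne_of_gt hna0
    set q := lam / na with hq
    have hq0 : 0 ≤ q := le_of_lt (div_pos hlam hna0)
    have hq1 : q ≤ 1 := le_of_lt ((div_lt_one hna0).mpr h)
    have hlamq : q * na = lam := div_mul_cancel₀ lam hne
    have e1 : eSq (u - (1 - q) • a)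
        = eSq u - 2 * ((1 - q) * ∑ j, u j * a j) + (1 - q)^2 * eSq a := by
      rw [eSq_sub, dot_smul_right, eSq_smul]
    have e2 : (1 - q) • a - a = (-q) • a := by
      funext j; simp [smul_eq_mul]; ring
    have e3 : eSq ((1 - q) • a - a) = q ^ 2 * eSq a := by
      rw [e2, eSq_smul]; ring_nf
    have e4 : eNorm ((1 - q) • a) = (1 - q) * na := by
      rw [eNorm_smul_of_nonneg (by linarith)]
    rw [e1, e3, e4, eSq_sub u a, hna2, ← hlamq]
    nlinarith [mul_le_mul_of_nonneg_left hd hq0]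
  · rw [vecTheta, if_neg h]
    push_neg at h
    have e1 : eSq (u - 0) = eSq u := by rw [sub_zero]
    have e2 : eSq ((0 : Fin k → ℝ) - a) = eSq a := by
      rw [zero_sub, show -a = (-1 : ℝ) • a by funext j; simp, eSq_smul]; ring
    rw [e1, e2, eNorm_zero, eSq_sub, hna2]
    nlinarith [mul_le_mul_of_nonneg_left h hnu]

lemma ip_eq_sum (M N : Matrix (Fin p) (Fin k) ℝ) :
    ip M N = ∑ i, ∑ j, M i j * N i j := by
  rw [ip, Matrix.trace, Finset.sum_comm]
  simp [Matrix.diag, Matrix.mul_apply, Matrix.transpose_apply]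

lemma frobSq_eq_ip (M : Matrix (Fin p) (Fin k) ℝ) : frobSq M = ip M M := by
  rw [ip_eq_sum, frobSq]; simp [sq]

lemma ip_comm (M N : Matrix (Fin p) (Fin k) ℝ) : ip M N = ip N M := by
  simp only [ip_eq_sum]; congr 1; ext i; congr 1; ext j; ring

lemma frobSq_sub (A B : Matrix (Fin p) (Fin k) ℝ) :
    frobSq (A - B) = frobSq A - 2 * ip A B + frobSq B := by
  simp only [frobSq, ip_eq_sum, Matrix.sub_apply, ← Finset.sum_add_distrib,
    ← Finset.sum_sub_distrib, Finset.mul_sum]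
  congr 1; ext i
  exact Finset.sum_congr rfl fun j _ => by ring

lemma ip_add_right (M A B : Matrix (Fin p) (Fin k) ℝ) :
    ip M (A + B) = ip M A + ip M B := by
  simp only [ip_eq_sum, Matrix.add_apply, ← Finset.sum_add_distrib, mul_add]

lemma ip_sub_right (M A B : Matrix (Fin p) (Fin k) ℝ) :
    ip M (A - B) = ip M A - ip M B := by
  simp only [ip_eq_sum, Matrix.sub_apply, ← Finset.sum_sub_distrib, mul_sub]

lemma ip_XX (X : Matrix (Fin m) (Fin p) ℝ) (M N : Matrix (Fin p) (Fin k) ℝ) :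
    ip (X * M) (X * N) = ip (Xᵀ * X * M) N := by
  simp [ip, Matrix.transpose_mul, Matrix.transpose_transpose, Matrix.mul_assoc]

lemma ip_YXSV (Y : Matrix (Fin m) (Fin n) ℝ) (X : Matrix (Fin m) (Fin p) ℝ)
    (S : Matrix (Fin p) (Fin k) ℝ) (V : Matrix (Fin n) (Fin k) ℝ) :
    ip Y (X * S * Vᵀ) = ip (Xᵀ * Y * V) S := by
  have h1 : Yᵀ * (X * S * Vᵀ) = (Yᵀ * X * S) * Vᵀ := by
    simp only [Matrix.mul_assoc]
  rw [ip, ip, h1, Matrix.trace_mul_comm]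
  congr 1
  simp only [Matrix.transpose_mul, Matrix.transpose_transpose, Matrix.mul_assoc]

lemma frobSq_XSV (X : Matrix (Fin m) (Fin p) ℝ) (S : Matrix (Fin p) (Fin k) ℝ)
    {V : Matrix (Fin n) (Fin k) ℝ} (hV : IsOrthCol V) :
    frobSq (X * S * Vᵀ) = frobSq (X * S) := by
  have hV' : Vᵀ * V = 1 := hV
  rw [frobSq_eq_ip, frobSq_eq_ip, ip, ip]
  have h1 : (X * S * Vᵀ)ᵀ * (X * S * Vᵀ) = (V * (Sᵀ * (Xᵀ * (X * S)))) * Vᵀ := by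
    simp only [Matrix.transpose_mul, Matrix.transpose_transpose, Matrix.mul_assoc]
  rw [h1, Matrix.trace_mul_comm, ← Matrix.mul_assoc, hV', Matrix.one_mul]
  congr 1
  simp only [Matrix.transpose_mul, Matrix.mul_assoc]

/-- Fobj in expanded form. -/
lemma Fobj_expand (Y : Matrix (Fin m) (Fin n) ℝ) (X : Matrix (Fin m) (Fin p) ℝ)
    (lam : ℝ) (S : Matrix (Fin p) (Fin k) ℝ) {V : Matrix (Fin n) (Fin k) ℝ}
    (hV : IsOrthCol V) :
    Fobj Y X lam S V = (1/2) * frobSq Y - ip (Xᵀ * Y * V) S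
      + (1/2) * frobSq (X * S) + lam * norm21 S := by
  rw [Fobj, frobSq_sub, ip_YXSV, frobSq_XSV X S hV]; ring

lemma frobSq_rows (M : Matrix (Fin p) (Fin k) ℝ) : frobSq M = ∑ i, eSq (M i) := rfl

lemma frobSq_X_le (X : Matrix (Fin m) (Fin p) ℝ)
    (hX : ∀ v : Fin p → ℝ, ∑ i, (X.mulVec v i) ^ 2 ≤ ∑ i, (v i) ^ 2)
    (D : Matrix (Fin p) (Fin k) ℝ) : frobSq (X * D) ≤ frobSq D := by
  rw [frobSq, frobSq]
  calc ∑ i, ∑ j, ((X * D) i j)^2 = ∑ j, ∑ i, ((X * D) i j)^2 := Finset.sum_comm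
  _ ≤ ∑ j, ∑ l, (D l j)^2 := Finset.sum_le_sum fun j _ => by
      simpa [Matrix.mulVec, dotProduct, Matrix.mul_apply] using hX (fun l => D l j)
  _ = ∑ l, ∑ j, (D l j)^2 := Finset.sum_comm

end StmtAux

open StmtAux in
/-- Lemma 5 (sufficient decrease of the thresholding step). -/
theorem stmt16 {m n p k : ℕ} (lam : ℝ) (hlam : 0 < lam) (hk : 1 ≤ k) (hkn : k ≤ n)
    (Y : Matrix (Fin m) (Fin n) ℝ) (X : Matrix (Fin m) (Fin p) ℝ)
    -- spectral norm `‖X‖₂ ≤ 1`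
    (hX : ∀ v : Fin p → ℝ, ∑ i, (X.mulVec v i) ^ 2 ≤ ∑ i, (v i) ^ 2)
    (V : Matrix (Fin n) (Fin k) ℝ) (hV : IsOrthCol V) (S : Matrix (Fin p) (Fin k) ℝ) :
    (1 / 2) * frobSq (Tmap Y X lam V S - S) ≤
      Fobj Y X lam S V - Fobj Y X lam (Tmap Y X lam V S) V := by
  set C : Matrix (Fin p) (Fin k) ℝ := Xᵀ * Y * V with hC
  set A : Matrix (Fin p) (Fin k) ℝ := C + (1 - Xᵀ * X) * S with hAdef
  set T : Matrix (Fin p) (Fin k) ℝ := Tmap Y X lam V S with hT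
  have hrow : ∀ i, T i = vecTheta lam (A i) := fun i => rfl
  -- Step 1: summed proximal inequality
  have h1 : (1/2) * frobSq (S - T) + ((1/2) * frobSq (T - A) + lam * norm21 T)
      ≤ (1/2) * frobSq (S - A) + lam * norm21 S := by
    simp only [frobSq_rows, norm21, Finset.mul_sum, ← Finset.sum_add_distrib]
    refine Finset.sum_le_sum fun i _ => ?_
    have h := prox_row lam hlam (A i) (S i)
    have e1 : (S - T) i = S i - vecTheta lam (A i) := by rw [← hrow i]; rfl
    have e2 : (T - A) i = vecTheta lam (A i) - A i := by rw [← hrow i]; rfl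
    rw [e1, e2, hrow i]
    exact h
  -- algebraic expansions
  have h2 : frobSq (S - A) = frobSq S - 2 * ip S A + frobSq A := frobSq_sub S A
  have h3 : frobSq (T - A) = frobSq T - 2 * ip T A + frobSq A := frobSq_sub T A
  have hA : A = C + (S - Xᵀ * X * S) := by
    rw [hAdef, Matrix.sub_mul, Matrix.one_mul]
  have h4 : ip S A = ip C S + frobSq S - frobSq (X * S) := by
    rw [hA, ip_add_right, ip_sub_right, ip_comm S C, frobSq_eq_ip,
      frobSq_eq_ip (X * S), ip_XX, ip_comm S (Xᵀ * X * S)]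
    ring
  have h5a : ip T (Xᵀ * X * S) = ip (X * S) (X * T) := by
    rw [ip_comm, ← ip_XX]
  have h5 : ip T A = ip C T + ip S T - ip (X * S) (X * T) := by
    rw [hA, ip_add_right, ip_sub_right, ip_comm T C, ip_comm T S, h5a]
    ring
  have h6 : frobSq (S - T) = frobSq S - 2 * ip S T + frobSq T := frobSq_sub S T
  have h7 : frobSq (X * S - X * T)
      = frobSq (X * S) - 2 * ip (X * S) (X * T) + frobSq (X * T) :=
    frobSq_sub (X * S) (X * T)
  have h7' : X * S - X * T = X * (S - T) := (Matrix.mul_sub X S T).symm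
  have h8 : frobSq (X * S - X * T) ≤ frobSq (S - T) := by
    rw [h7']; exact frobSq_X_le X hX (S - T)
  have h9 : Fobj Y X lam S V = (1/2) * frobSq Y - ip C S
      + (1/2) * frobSq (X * S) + lam * norm21 S := Fobj_expand Y X lam S hV
  have h10 : Fobj Y X lam T V = (1/2) * frobSq Y - ip C T
      + (1/2) * frobSq (X * T) + lam * norm21 T := Fobj_expand Y X lam T hV
  have h11 : frobSq (T - S) = frobSq (S - T) := by
    simp only [frobSq, Matrix.sub_apply]
    exact Finset.sum_congr rfl fun i _ => Finset.sum_congr rfl fun j _ => by ring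
  rw [h11, h9, h10]
  linarith [h1, h2, h3, h4, h5, h6, h7, h8]

end
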